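/- The function r ↦ r · P_0(r) is strictly increasing on (0, ∞). -/

import Mathlib

open Real Filter Set

/-- Modified Bessel function of the first kind of (integer) order `n`. -/
noncomputable def besselI (n : ℕ) (r : ℝ) : ℝ :=
  ∑' k : ℕ, (1 / (k.factorial * Real.Gamma (n + k + 1))) * (r / 2) ^ (n + 2 * k)

/-- `P n r = I_{n+1}(r) / (r * I_n(r))`. -/
noncomputable def P (n : ℕ) (r : ℝ) : ℝ := besselI (n + 1) r / (r * besselI n r)

/-!
With `x = (r/2)²` one has `I₀(r) = F₀(x)` and `I₁(r) = (r/2) F₁(x)`, where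
`Fₙ(x) = ∑ₖ xᵏ / (k! (k+n)!)` is entire and `Fₙ' = Fₙ₊₁`. The derivative of `I₁/I₀` is therefore a
positive multiple of `(F₁ + 2x F₂) F₀ - 2x F₁²`, i.e. of `I₁' I₀ - I₁²`. Its Taylor coefficients in
`x` are, by a telescoping identity, `(2m+1)⁻¹ ∑ⱼ 1 / (j! (j+1)! ((m-j)!)²) > 0`, so `I₁/I₀`, which
is `r P₀(r)`, is strictly increasing on all of `ℝ`.
-/

open Finset
open scoped Nat

def IsEntireSeries (c : ℕ → ℝ) : Prop := ∀ x : ℝ, Summable fun k => ‖c k * x ^ k‖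

def cauchyProduct (a b : ℕ → ℝ) (n : ℕ) : ℝ := ∑ k ∈ range (n + 1), a k * b (n - k)

theorem cauchyProduct_mul_pow (a b : ℕ → ℝ) (x : ℝ) (n : ℕ) :
    cauchyProduct a b n * x ^ n = ∑ k ∈ range (n + 1), a k * x ^ k * (b (n - k) * x ^ (n - k)) := by
  rw [cauchyProduct, sum_mul]
  refine sum_congr rfl fun k hk => ?_
  rw [← pow_mul_pow_sub x (Nat.lt_succ_iff.1 (mem_range.1 hk))]
  ring

theorem isEntireSeries_inv_factorial : IsEntireSeries fun k => (k ! : ℝ)⁻¹ := fun x =>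
  (Real.summable_pow_div_factorial ‖x‖).congr fun k => by
    rw [norm_mul, norm_pow, norm_inv, RCLike.norm_natCast, inv_mul_eq_div]

namespace IsEntireSeries

variable {a b c d : ℕ → ℝ}

theorem summable (hc : IsEntireSeries c) (x : ℝ) : Summable fun k => c k * x ^ k :=
  (hc x).of_norm

theorem of_norm_le_pow_mul (hc : IsEntireSeries c) (M : ℝ) (h : ∀ k, ‖d k‖ ≤ M ^ k * ‖c k‖) :
    IsEntireSeries d := fun x =>
  (hc (M * x)).of_nonneg_of_le (fun _ => norm_nonneg _) fun k => by
    have hM : M ^ k ≤ ‖M‖ ^ k := by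
      rw [← norm_pow]; exact le_abs_self _
    calc ‖d k * x ^ k‖ = ‖d k‖ * ‖x‖ ^ k := by rw [norm_mul, norm_pow]
      _ ≤ ‖M‖ ^ k * ‖c k‖ * ‖x‖ ^ k := by gcongr; exact (h k).trans (by gcongr)
      _ = ‖c k * (M * x) ^ k‖ := by rw [norm_mul, norm_pow, norm_mul, mul_pow]; ring

theorem const_mul (hc : IsEntireSeries c) (r : ℝ) : IsEntireSeries fun k => r * c k := fun x => by
  simpa only [norm_mul, mul_assoc] using (hc x).mul_left ‖r‖

theorem nat_mul (hc : IsEntireSeries c) : IsEntireSeries fun k => k * c k :=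
  hc.of_norm_le_pow_mul 2 fun k => by
    rw [norm_mul, RCLike.norm_natCast]
    gcongr
    exact_mod_cast Nat.lt_two_pow_self.le

theorem hasDerivAt (hc : IsEntireSeries c) (x : ℝ) :
    HasDerivAt (fun y => ∑' k, c k * y ^ k) (∑' k, (k + 1) * c (k + 1) * x ^ k) x := by
  set R := |x| + 1
  have hR : 1 ≤ R := le_add_of_nonneg_left (abs_nonneg x)
  have hx : x ∈ Ioo (-R) R := ⟨by linarith [neg_abs_le x], by linarith [le_abs_self x]⟩
  have hsplit : (fun y => ∑' k, c k * y ^ k) = fun y => c 0 + ∑' k, c (k + 1) * y ^ (k + 1) := by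
    funext y
    rw [(hc.summable y).tsum_eq_zero_add, pow_zero, mul_one]
  rw [hsplit]
  refine (hasDerivAt_tsum_of_isPreconnected (g := fun k y => c (k + 1) * y ^ (k + 1))
    (g' := fun k y => (k + 1) * c (k + 1) * y ^ k)
    ((summable_nat_add_iff 1).2 (hc.nat_mul R)) isOpen_Ioo isPreconnected_Ioo
    (fun k y _ => ?_) (fun k y hy => ?_) hx ((summable_nat_add_iff 1).2 (hc.summable x)) hx).const_add
    (c 0)
  · exact ((hasDerivAt_pow (k + 1) y).const_mul (c (k + 1))).congr_deriv
      (by rw [Nat.add_sub_cancel]; push_cast; ring)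
  · have hy' : ‖y‖ ≤ R := abs_le.2 ⟨hy.1.le, hy.2.le⟩
    calc ‖(k + 1) * c (k + 1) * y ^ k‖ = ‖((k + 1 : ℕ) : ℝ) * c (k + 1)‖ * ‖y‖ ^ k := by
          rw [norm_mul, norm_pow]; push_cast; rfl
      _ ≤ ‖((k + 1 : ℕ) : ℝ) * c (k + 1)‖ * R ^ (k + 1) := by
          gcongr
          exact (pow_le_pow_left₀ (norm_nonneg y) hy' k).trans (pow_le_pow_right₀ hR k.le_succ)
      _ = ‖((k + 1 : ℕ) : ℝ) * c (k + 1) * R ^ (k + 1)‖ := by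
          rw [norm_mul _ (R ^ _), norm_pow, Real.norm_of_nonneg (by linarith : (0:ℝ) ≤ R)]

theorem mul_tsum_succ_mul_pow (hc : IsEntireSeries c) (x : ℝ) :
    x * ∑' k, (k + 1) * c (k + 1) * x ^ k = ∑' k, k * c k * x ^ k := by
  rw [(hc.nat_mul.summable x).tsum_eq_zero_add, ← tsum_mul_left]
  push_cast
  simp only [zero_mul, zero_add]
  exact tsum_congr fun k => by ring

theorem tsum_pos (hc : IsEntireSeries c) (hnonneg : ∀ k, 0 ≤ c k) (h0 : 0 < c 0) {x : ℝ}
    (hx : 0 ≤ x) : 0 < ∑' k, c k * x ^ k :=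
  (hc.summable x).tsum_pos (fun k => mul_nonneg (hnonneg k) (pow_nonneg hx k)) 0 (by simpa using h0)

theorem tsum_mul_tsum (ha : IsEntireSeries a) (hb : IsEntireSeries b) (x : ℝ) :
    (∑' k, a k * x ^ k) * (∑' k, b k * x ^ k) = ∑' n, cauchyProduct a b n * x ^ n := by
  simp_rw [tsum_mul_tsum_eq_tsum_sum_range_of_summable_norm (ha x) (hb x), cauchyProduct_mul_pow]

theorem mul (ha : IsEntireSeries a) (hb : IsEntireSeries b) : IsEntireSeries (cauchyProduct a b) :=
  fun x => by
    simpa only [cauchyProduct_mul_pow] using summable_norm_sum_mul_range_of_summable_norm (ha x) (hb x)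

theorem mul_tsum_lt_tsum (ha : IsEntireSeries a) (hb : IsEntireSeries b) (h0 : 0 < b 0)
    (h : ∀ n, a n ≤ b (n + 1)) {x : ℝ} (hx : 0 ≤ x) :
    x * ∑' n, a n * x ^ n < ∑' n, b n * x ^ n := by
  rw [(hb.summable x).tsum_eq_zero_add, ← tsum_mul_left, pow_zero, mul_one]
  have hle : ∑' n, x * (a n * x ^ n) ≤ ∑' n, b (n + 1) * x ^ (n + 1) :=
    Summable.tsum_le_tsum (fun n => by
        rw [mul_left_comm, ← pow_succ']; exact mul_le_mul_of_nonneg_right (h n) (pow_nonneg hx _))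
      ((ha.summable x).mul_left x) ((summable_nat_add_iff 1).2 (hb.summable x))
  linarith

end IsEntireSeries

noncomputable def besselCoeff (n k : ℕ) : ℝ := ((k ! : ℝ) * (k + n)!)⁻¹

noncomputable def besselSeries (n : ℕ) (x : ℝ) : ℝ := ∑' k, besselCoeff n k * x ^ k

theorem besselCoeff_pos (n k : ℕ) : 0 < besselCoeff n k := by
  unfold besselCoeff; positivity

theorem succ_mul_besselCoeff_succ (n k : ℕ) :
    ((k : ℝ) + 1) * besselCoeff n (k + 1) = besselCoeff (n + 1) k := by
  rw [besselCoeff, besselCoeff, Nat.factorial_succ, show k + 1 + n = k + (n + 1) by omega]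
  push_cast
  field_simp

theorem isEntireSeries_besselCoeff (n : ℕ) : IsEntireSeries (besselCoeff n) :=
  isEntireSeries_inv_factorial.of_norm_le_pow_mul 1 fun k => by
    rw [one_pow, one_mul, Real.norm_of_nonneg (besselCoeff_pos n k).le,
      Real.norm_of_nonneg (by positivity)]
    exact inv_anti₀ (by positivity)
      (le_mul_of_one_le_right (by positivity) (by exact_mod_cast (k + n).factorial_pos))

theorem besselI_eq (n : ℕ) (r : ℝ) :
    besselI n r = (r / 2) ^ n * besselSeries n ((r / 2) ^ 2) := by
  rw [besselI, besselSeries, ← tsum_mul_left]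
  refine tsum_congr fun k => ?_
  have hΓ : Real.Gamma (n + k + 1) = (k + n)! := by
    rw [add_comm k n]; exact_mod_cast Real.Gamma_nat_eq_factorial (n + k)
  rw [hΓ, besselCoeff, pow_add, pow_mul]
  ring

theorem hasDerivAt_besselSeries (n : ℕ) (x : ℝ) :
    HasDerivAt (besselSeries n) (besselSeries (n + 1) x) x := by
  have h := (isEntireSeries_besselCoeff n).hasDerivAt x
  simp_rw [succ_mul_besselCoeff_succ] at h
  exact h

theorem besselSeries_pos (n : ℕ) {x : ℝ} (hx : 0 ≤ x) : 0 < besselSeries n x :=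
  (isEntireSeries_besselCoeff n).tsum_pos (fun k => (besselCoeff_pos n k).le)
    (besselCoeff_pos n 0) hx

theorem besselSeries_one_add_two_mul_besselSeries_two (x : ℝ) :
    besselSeries 1 x + 2 * x * besselSeries 2 x = ∑' k, (2 * k + 1) * besselCoeff 1 k * x ^ k := by
  have h := (isEntireSeries_besselCoeff 1).mul_tsum_succ_mul_pow x
  simp_rw [succ_mul_besselCoeff_succ] at h
  rw [besselSeries, besselSeries, mul_assoc, h, ← tsum_mul_left,
    ← ((isEntireSeries_besselCoeff 1).summable x).tsum_add
      (((isEntireSeries_besselCoeff 1).nat_mul.summable x).mul_left 2)]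
  exact tsum_congr fun k => by ring

theorem two_mul_add_one_mul_sum_besselCoeff (m : ℕ) :
    (2 * m + 1) * ∑ j ∈ range (m + 1), besselCoeff 1 j * besselCoeff 0 (m - j) * (4 * j + 1 - 2 * m)
      = ∑ j ∈ range (m + 1), besselCoeff 1 j * besselCoeff 0 (m - j) := by
  set g : ℕ → ℝ := fun j => 4 * j * besselCoeff 0 j * besselCoeff 0 (m - j)
  have hstep : ∀ j ∈ range m, (2 * m + 1) * (besselCoeff 1 j * besselCoeff 0 (m - j) *
      (4 * j + 1 - 2 * m)) - besselCoeff 1 j * besselCoeff 0 (m - j) = g j - g (j + 1) := by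
    intro j hj
    obtain ⟨d, rfl⟩ : ∃ d, m = j + d + 1 := ⟨m - j - 1, by have := mem_range.1 hj; omega⟩
    simp only [g, show j + d + 1 - j = d + 1 by omega, show j + d + 1 - (j + 1) = d by omega,
      besselCoeff, Nat.factorial_succ, add_zero]
    push_cast
    field_simp
    ring
  have hlast : (2 * m + 1) * (besselCoeff 1 m * besselCoeff 0 (m - m) * (4 * m + 1 - 2 * m))
      - besselCoeff 1 m * besselCoeff 0 (m - m) = g m := by
    simp only [g, Nat.sub_self, besselCoeff, Nat.factorial_succ, Nat.factorial_zero, add_zero]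
    push_cast
    field_simp
    ring
  rw [mul_sum, ← sub_eq_zero, ← sum_sub_distrib, sum_range_succ, sum_congr rfl hstep,
    sum_range_sub', hlast]
  simp [g]

theorem two_mul_cauchyProduct_le (n : ℕ) :
    2 * cauchyProduct (besselCoeff 1) (besselCoeff 1) n
      ≤ cauchyProduct (fun k => (2 * k + 1) * besselCoeff 1 k) (besselCoeff 0) (n + 1) := by
  have hq : 2 * cauchyProduct (besselCoeff 1) (besselCoeff 1) n = ∑ j ∈ range (n + 2),
      besselCoeff 1 j * besselCoeff 0 (n + 1 - j) * (2 * ((n + 1 : ℕ) - j)) := by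
    rw [sum_range_succ, sub_self, mul_zero, mul_zero, add_zero,
      cauchyProduct, mul_sum]
    refine sum_congr rfl fun j hj => ?_
    have hj : j ≤ n := Nat.lt_succ_iff.1 (mem_range.1 hj)
    rw [← succ_mul_besselCoeff_succ 0 (n - j), show n + 1 - j = n - j + 1 by omega, Nat.cast_sub hj]
    push_cast
    ring
  have hdiff : cauchyProduct (fun k => (2 * k + 1) * besselCoeff 1 k) (besselCoeff 0) (n + 1)
      - 2 * cauchyProduct (besselCoeff 1) (besselCoeff 1) n = ∑ j ∈ range (n + 2),
      besselCoeff 1 j * besselCoeff 0 (n + 1 - j) * (4 * j + 1 - 2 * ((n + 1 : ℕ) : ℝ)) := by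
    rw [hq, cauchyProduct, ← sum_sub_distrib]
    exact sum_congr rfl fun j _ => by ring
  have hpos := two_mul_add_one_mul_sum_besselCoeff (n + 1)
  rw [← hdiff] at hpos
  have : 0 ≤ ∑ j ∈ range (n + 1 + 1), besselCoeff 1 j * besselCoeff 0 (n + 1 - j) :=
    sum_nonneg fun j _ => (mul_pos (besselCoeff_pos 1 j) (besselCoeff_pos 0 _)).le
  nlinarith

theorem two_mul_mul_besselSeries_one_sq_lt {x : ℝ} (hx : 0 ≤ x) :
    2 * x * besselSeries 1 x ^ 2
      < (besselSeries 1 x + 2 * x * besselSeries 2 x) * besselSeries 0 x := by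
  have ha := isEntireSeries_besselCoeff 1
  have hb := isEntireSeries_besselCoeff 0
  have hh : IsEntireSeries fun k => (2 * k + 1) * besselCoeff 1 k :=
    ha.of_norm_le_pow_mul 3 fun k => by
      rw [norm_mul, Real.norm_of_nonneg (by positivity : (0 : ℝ) ≤ 2 * k + 1)]
      gcongr
      have h := one_add_mul_le_pow (by norm_num : (-2 : ℝ) ≤ 2) k
      norm_num at h
      linarith
  have h0 : 0 < cauchyProduct (fun k => (2 * k + 1) * besselCoeff 1 k) (besselCoeff 0) 0 := by
    simpa [cauchyProduct] using mul_pos (besselCoeff_pos 1 0) (besselCoeff_pos 0 0)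
  calc 2 * x * besselSeries 1 x ^ 2
      = x * ∑' n, 2 * cauchyProduct (besselCoeff 1) (besselCoeff 1) n * x ^ n := by
        simp_rw [sq, besselSeries, ha.tsum_mul_tsum ha, mul_assoc, tsum_mul_left]
        ring
    _ < ∑' n, cauchyProduct (fun k => (2 * k + 1) * besselCoeff 1 k) (besselCoeff 0) n * x ^ n :=
        ((ha.mul ha).const_mul 2).mul_tsum_lt_tsum (hh.mul hb) h0 two_mul_cauchyProduct_le hx
    _ = _ := by
        rw [besselSeries_one_add_two_mul_besselSeries_two, besselSeries, hh.tsum_mul_tsum hb]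

noncomputable def besselRatio (s : ℝ) : ℝ := s * besselSeries 1 (s ^ 2) / besselSeries 0 (s ^ 2)

theorem hasDerivAt_besselRatio (s : ℝ) :
    HasDerivAt besselRatio
      (((besselSeries 1 (s ^ 2) + 2 * s ^ 2 * besselSeries 2 (s ^ 2)) * besselSeries 0 (s ^ 2)
        - 2 * s ^ 2 * besselSeries 1 (s ^ 2) ^ 2) / besselSeries 0 (s ^ 2) ^ 2) s := by
  have hsq : HasDerivAt (fun s : ℝ => s ^ 2) (2 * s) s := by simpa using hasDerivAt_pow 2 s
  have h1 := (hasDerivAt_id' s).fun_mul ((hasDerivAt_besselSeries 1 (s ^ 2)).comp s hsq)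
  have h0 := (hasDerivAt_besselSeries 0 (s ^ 2)).comp s hsq
  refine (h1.fun_div h0 (besselSeries_pos 0 (sq_nonneg s)).ne').congr_deriv ?_
  simp only [Function.comp_apply]
  ring

theorem strictMono_besselRatio : StrictMono besselRatio :=
  strictMono_of_deriv_pos fun s => by
    rw [(hasDerivAt_besselRatio s).deriv]
    exact div_pos (sub_pos.2 (two_mul_mul_besselSeries_one_sq_lt (sq_nonneg s)))
      (pow_pos (besselSeries_pos 0 (sq_nonneg s)) 2)

theorem rP0_strictMono :
    StrictMonoOn (fun r : ℝ => r * P 0 r) (Set.Ioi 0) := by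
  have hP : ∀ r : ℝ, r ≠ 0 → r * P 0 r = besselRatio (r / 2) := by
    intro r hr
    have hI0 := (besselSeries_pos 0 (sq_nonneg (r / 2))).ne'
    rw [P, besselI_eq, besselI_eq, besselRatio, pow_zero, one_mul, pow_one]
    field_simp
  intro a ha b hb hab
  simp only [hP a (ne_of_gt ha), hP b (ne_of_gt hb)]
  exact strictMono_besselRatio (by linarith)
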